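/- Let A, B, C be disjoint finite sets. Let X_{AB} be a simplicial complex on A ∪ B with Stanley–Reisner ideal I_{AB}, and X_{BC} a simplicial complex on B ∪ C with Stanley–Reisner ideal I_{BC}; assume no minimal generator of I_{AB} is divisible by a product x_{b_1} x_{b_2} with b_1, b_2 ∈ B, and similarly for I_{BC}. Let X be the simplicial complex on A ∪ B ∪ C whose Stanley–Reisner ideal is generated by: all generators x_𝐚 of I_{AB} with support 𝐚 ⊆ A; all generators x_𝐜 of I_{BC} with support 𝐜 ⊆ C; and all monomials x_𝐚 x_b x_𝐜 with b ∈ B such that x_𝐚 x_b ∈ I_{AB} and x_b x_𝐜 ∈ I_{BC}. Let B′ and B″ be two disjoint copies of B, and let X_{AB′} on A ∪ B′ and X_{B″C} on B″ ∪ C be the corresponding copies of X_{AB} and X_{BC}. Then the join X_{AB′} * X_{B″C} is homotopy equivalent to X. -/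

import Mathlib

/-!
Common infrastructure: abstract simplicial complexes, geometric realization,
homotopy equivalence, reduced simplicial cohomology, squarefree monomial ideals
(encoded as upward closed families of finite sets), Koszul-complex multigraded
Betti numbers, and letterplace ideals of posets.
-/

noncomputable section

open Finset

attribute [local instance] Classical.propDecidable

universe u v w

/-- An abstract simplicial complex on the vertex type `V`: a collection of
finite subsets of `V` (the faces) closed under taking subsets. -/
structure SComplex (V : Type u) where
  faces : Set (Finset V)
  down_closed : ∀ {F G : Finset V}, F ∈ faces → G ⊆ F → G ∈ faces

namespace SComplex

/-- The geometric realization of a simplicial complex: the subspace of `V → ℝ`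
consisting of the convex weight functions supported on a face. -/
def realization {V : Type u} [Fintype V] (X : SComplex V) : Set (V → ℝ) :=
  {f | (∀ v, 0 ≤ f v) ∧ (∑ v, f v) = 1 ∧ ∃ F ∈ X.faces, ∀ v, f v ≠ 0 → v ∈ F}

/-- Two simplicial complexes are homotopy equivalent if their geometric
realizations are homotopy equivalent topological spaces. -/
def HEquiv {V : Type u} {W : Type v} [Fintype V] [Fintype W]
    (X : SComplex V) (Y : SComplex W) : Prop :=
  Nonempty (ContinuousMap.HomotopyEquiv X.realization Y.realization)

/-- Isomorphism ("equality up to relabeling of vertices") of simplicial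
complexes: an order isomorphism between the face posets. -/
def IsIsomorphic {V : Type u} {W : Type v} (X : SComplex V) (Y : SComplex W) : Prop :=
  Nonempty ({F : Finset V // F ∈ X.faces} ≃o {G : Finset W // G ∈ Y.faces})

/-- The induced subcomplex on a subset `S` of the vertex set. -/
def restrict {V : Type u} (X : SComplex V) (S : Set V) : SComplex V where
  faces := {F | F ∈ X.faces ∧ ∀ v ∈ F, v ∈ S}
  down_closed := by
    intro F G hF hGF
    exact ⟨X.down_closed hF.1 hGF, fun v hv => hF.2 v (hGF hv)⟩

/-- The join of two simplicial complexes (on the disjoint union of the two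
vertex types). -/
def join {V : Type u} {W : Type v} (X : SComplex V) (Y : SComplex W) :
    SComplex (V ⊕ W) where
  faces := {F | F.preimage Sum.inl Sum.inl_injective.injOn ∈ X.faces ∧
                F.preimage Sum.inr Sum.inr_injective.injOn ∈ Y.faces}
  down_closed := by
    intro F G hF hGF
    constructor
    · exact X.down_closed hF.1 fun x hx => by
        simp only [Finset.mem_preimage] at hx ⊢
        exact hGF hx
    · exact Y.down_closed hF.2 fun x hx => by
        simp only [Finset.mem_preimage] at hx ⊢
        exact hGF hx

/-- The join of a finite family of simplicial complexes on pairwise disjoint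
vertex types. -/
def bigJoin {ι : Type u} {V : ι → Type v} (X : ∀ i, SComplex (V i)) :
    SComplex (Σ i, V i) where
  faces := {F | ∀ i, F.preimage (Sigma.mk i) sigma_mk_injective.injOn ∈ (X i).faces}
  down_closed := by
    intro F G hF hGF i
    exact (X i).down_closed (hF i) fun x hx => by
      simp only [Finset.mem_preimage] at hx ⊢
      exact hGF hx

/-- The simplicial complex consisting of two disjoint points. -/
def twoPoint : SComplex Bool where
  faces := {F | F.card ≤ 1}
  down_closed := by
    intro F G hF hGF
    exact le_trans (Finset.card_le_card hGF) hF

/-- The suspension of a simplicial complex: its join with two points. -/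
def suspension {V : Type u} (X : SComplex V) : SComplex (V ⊕ Bool) :=
  join X twoPoint

/-- Vertex type of the `m`-fold iterated suspension. -/
def SuspType (V : Type u) : ℕ → Type u
  | 0 => V
  | m + 1 => SuspType V m ⊕ Bool

/-- The `m`-fold iterated suspension of a simplicial complex. -/
def iterSusp {V : Type u} (X : SComplex V) : (m : ℕ) → SComplex (SuspType V m)
  | 0 => X
  | m + 1 => suspension (iterSusp X m)

end SComplex

/-- Position of `x` with respect to a finite set: the number of elements of `F`
preceding `x` in a fixed well-ordering of the vertex type.  Used for the signs
in (co)chain complexes. -/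
def vpos {V : Type u} (F : Finset V) (x : V) : ℕ :=
  (F.filter fun w => WellOrderingRel w x).card

namespace SComplex

variable (k : Type w) [Field k]

/-- The faces of dimension `i` (i.e. of cardinality `i + 1`), `i ∈ ℤ`. -/
abbrev Face {V : Type u} (X : SComplex V) (i : ℤ) : Type u :=
  {F : Finset V // F ∈ X.faces ∧ (F.card : ℤ) = i + 1}

/-- Reduced simplicial `i`-cochains of `X` with coefficients in `k`
(the empty face in dimension `-1` is included). -/
abbrev cochain {V : Type u} (X : SComplex V) (i : ℤ) : Type (max u w) :=
  Face X i → k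

/-- Evaluation of a cochain on an arbitrary finite set (zero if the set is not
a face of the appropriate dimension). -/
def evalC {V : Type u} {X : SComplex V} {i : ℤ} (f : cochain k X i) (F : Finset V) : k :=
  if h : F ∈ X.faces ∧ (F.card : ℤ) = i + 1 then f ⟨F, h⟩ else 0

theorem evalC_add {V : Type u} {X : SComplex V} {i : ℤ} (f g : cochain k X i)
    (F : Finset V) : evalC k (f + g) F = evalC k f F + evalC k g F := by
  unfold evalC
  split_ifs <;> simp

theorem evalC_smul {V : Type u} {X : SComplex V} {i : ℤ} (s : k) (f : cochain k X i)
    (F : Finset V) : evalC k (s • f) F = s * evalC k f F := by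
  unfold evalC
  split_ifs <;> simp

/-- The simplicial coboundary map on reduced cochains. -/
def coboundary {V : Type u} (X : SComplex V) (i : ℤ) :
    cochain k X i →ₗ[k] cochain k X (i + 1) where
  toFun f F := ∑ v ∈ F.1, ((-1 : k) ^ vpos F.1 v) * evalC k f (F.1.erase v)
  map_add' f g := by
    funext F
    show (∑ v ∈ F.1, ((-1 : k) ^ vpos F.1 v) * evalC k (f + g) (F.1.erase v))
      = (∑ v ∈ F.1, ((-1 : k) ^ vpos F.1 v) * evalC k f (F.1.erase v))
      + (∑ v ∈ F.1, ((-1 : k) ^ vpos F.1 v) * evalC k g (F.1.erase v))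
    rw [← Finset.sum_add_distrib]
    exact Finset.sum_congr rfl fun v _ => by rw [evalC_add, mul_add]
  map_smul' s f := by
    funext F
    show (∑ v ∈ F.1, ((-1 : k) ^ vpos F.1 v) * evalC k (s • f) (F.1.erase v))
      = s * ∑ v ∈ F.1, ((-1 : k) ^ vpos F.1 v) * evalC k f (F.1.erase v)
    rw [Finset.mul_sum]
    exact Finset.sum_congr rfl fun v _ => by rw [evalC_smul]; ring

/-- The dimension of the `i`-th reduced simplicial cohomology of `X` with
coefficients in the field `k` (computed as `dim ker d^i - dim im d^(i-1)`). -/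
def redCohomDim {V : Type u} (X : SComplex V) (i : ℤ) : ℕ :=
  Module.finrank k (LinearMap.ker (coboundary k X i)) -
    Module.finrank k (LinearMap.range (coboundary k X (i - 1)))

/-- The generating series `t·H̃(X,t) = ∑_{i ≥ -1} t^{i+1} dim_k H̃^i(X;k)`,
an element of `ℕ⟦t⟧`. -/
def hSeries {V : Type u} (X : SComplex V) : PowerSeries ℕ :=
  PowerSeries.mk fun m => redCohomDim k X ((m : ℤ) - 1)

end SComplex

/-- A squarefree monomial ideal on the set of variables `W`, encoded by the
upward closed family of the supports of the squarefree monomials belonging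
to it. -/
structure SqfIdeal (W : Type u) where
  carrier : Set (Finset W)
  up_closed : ∀ {S T : Finset W}, S ∈ carrier → S ⊆ T → T ∈ carrier

namespace SqfIdeal

/-- The basis of the degree-`R` strand of the Koszul complex `K(x;I)` in
homological degree `i`. -/
abbrev KBasis {W : Type u} (I : SqfIdeal W) (R : Finset W) (i : ℤ) : Type u :=
  {S : Finset W // S ⊆ R ∧ (S.card : ℤ) = i ∧ R \ S ∈ I.carrier}

/-- The degree-`R` strand of the Koszul complex of `I`, in homological
degree `i`, with coefficients in `k`. -/
abbrev kchain (k : Type w) [Field k] {W : Type u} (I : SqfIdeal W) (R : Finset W)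
    (i : ℤ) : Type (max u w) :=
  KBasis I R i → k

variable (k : Type w) [Field k]

/-- Evaluation of a Koszul chain on an arbitrary finite set. -/
def evalK {W : Type u} {I : SqfIdeal W} {R : Finset W} {i : ℤ}
    (f : kchain k I R i) (S : Finset W) : k :=
  if h : S ⊆ R ∧ (S.card : ℤ) = i ∧ R \ S ∈ I.carrier then f ⟨S, h⟩ else 0

theorem evalK_add {W : Type u} {I : SqfIdeal W} {R : Finset W} {i : ℤ}
    (f g : kchain k I R i) (S : Finset W) :
    evalK k (f + g) S = evalK k f S + evalK k g S := by
  unfold evalK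
  split_ifs <;> simp

theorem evalK_smul {W : Type u} {I : SqfIdeal W} {R : Finset W} {i : ℤ}
    (s : k) (f : kchain k I R i) (S : Finset W) :
    evalK k (s • f) S = s * evalK k f S := by
  unfold evalK
  split_ifs <;> simp

/-- The Koszul differential on the degree-`R` strand (as a map of the dual
function spaces). -/
def koszulD {W : Type u} (I : SqfIdeal W) (R : Finset W) (i : ℤ) :
    kchain k I R i →ₗ[k] kchain k I R (i - 1) where
  toFun f S := ∑ v ∈ R \ S.1, ((-1 : k) ^ vpos S.1 v) * evalK k f (insert v S.1)
  map_add' f g := by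
    funext S
    show (∑ v ∈ R \ S.1, ((-1 : k) ^ vpos S.1 v) * evalK k (f + g) (insert v S.1))
      = (∑ v ∈ R \ S.1, ((-1 : k) ^ vpos S.1 v) * evalK k f (insert v S.1))
      + (∑ v ∈ R \ S.1, ((-1 : k) ^ vpos S.1 v) * evalK k g (insert v S.1))
    rw [← Finset.sum_add_distrib]
    exact Finset.sum_congr rfl fun v _ => by rw [evalK_add, mul_add]
  map_smul' s f := by
    funext S
    show (∑ v ∈ R \ S.1, ((-1 : k) ^ vpos S.1 v) * evalK k (s • f) (insert v S.1))
      = s * ∑ v ∈ R \ S.1, ((-1 : k) ^ vpos S.1 v) * evalK k f (insert v S.1)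
    rw [Finset.mul_sum]
    exact Finset.sum_congr rfl fun v _ => by rw [evalK_smul]; ring

end SqfIdeal

/-- The multigraded Betti number `β_{i,R}(I) = dim_k Tor_i(I,k)_R` of a
squarefree monomial ideal in the squarefree multidegree `R`, computed as the
dimension of the `i`-th homology of the degree-`R` strand of the Koszul
complex. -/
def multiBetti (k : Type w) [Field k] {W : Type u} (I : SqfIdeal W) (i : ℤ)
    (R : Finset W) : ℕ :=
  Module.finrank k (LinearMap.ker (SqfIdeal.koszulD k I R i)) -
    Module.finrank k (LinearMap.range (SqfIdeal.koszulD k I R (i + 1)))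

/-- The graded Betti number `β_{i,j}(I) = dim_k Tor_i(I,k)_j` of a squarefree
monomial ideal: the sum of the multigraded Betti numbers over the (squarefree)
multidegrees of cardinality `j`. -/
def gradedBetti (k : Type w) [Field k] {W : Type u} [Fintype W] (I : SqfIdeal W)
    (i : ℤ) (j : ℤ) : ℕ :=
  if 0 ≤ j then
    ∑ R ∈ Finset.powersetCard j.toNat (Finset.univ : Finset W), multiBetti k I i R
  else 0

/-- The `n`-th letterplace ideal `L(n,P)` of a poset `P`: the squarefree
monomial ideal on the variables `x_{(i,p)}`, `(i,p) ∈ [n] × P`, generated by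
the monomials `x_{(1,p₁)} ⋯ x_{(n,pₙ)}` with `p₁ ≤ p₂ ≤ ⋯ ≤ pₙ` in `P`. -/
def letterplace (n : ℕ) (P : Type u) [PartialOrder P] : SqfIdeal (Fin n × P) where
  carrier := {T | ∃ c : Fin n → P, Monotone c ∧ ∀ i, (i, c i) ∈ T}
  up_closed := by
    rintro S T ⟨c, hc, hm⟩ hST
    exact ⟨c, hc, fun i => hST (hm i)⟩

/-- The `i`-th part `R_i ⊆ P` of a multidegree `R ⊆ [n] × P`. -/
def part {n : ℕ} {P : Type u} (R : Finset (Fin n × P)) (i : Fin n) : Finset P :=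
  (R.filter fun q => q.1 = i).image Prod.snd

/-- The set of maximal elements of the induced subposet on `A`. -/
def maxSet {P : Type u} [PartialOrder P] (A : Finset P) : Finset P :=
  A.filter fun a => ∀ b ∈ A, a ≤ b → a = b

/-- The set of minimal elements of the induced subposet on `A`. -/
def minSet {P : Type u} [PartialOrder P] (A : Finset P) : Finset P :=
  A.filter fun a => ∀ b ∈ A, b ≤ a → a = b

/-- The transitive order `A ≤ B` on subsets of a poset: every maximal element
of `A` is below some minimal element of `B`, and every minimal element of `B`
is above some maximal element of `A`. -/
def subsetLE {P : Type u} [PartialOrder P] (A B : Finset P) : Prop :=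
  (∀ a ∈ maxSet A, ∃ b ∈ minSet B, a ≤ b) ∧
  (∀ b ∈ minSet B, ∃ a ∈ maxSet A, a ≤ b)

/-- The independence complex of the bipartite graph on two disjoint copies of
`P`, with left vertex set `A`, right vertex set `B`, and edges the pairs
`(p, q) ∈ A × B` with `p ≤ q` in `P`. -/
def XComplex {P : Type u} [PartialOrder P] (A B : Finset P) : SComplex (P ⊕ P) where
  faces := {F | (∀ x ∈ F, Sum.elim (· ∈ A) (· ∈ B) x) ∧
                ∀ p q : P, Sum.inl p ∈ F → Sum.inr q ∈ F → ¬ p ≤ q}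
  down_closed := by
    intro F G hF hGF
    exact ⟨fun x hx => hF.1 x (hGF hx), fun p q hp hq => hF.2 p q (hGF hp) (hGF hq)⟩

/-- `Y₁`: the simplicial complex on `A` whose faces are the subsets `F ⊆ A`
such that some `b ∈ B` dominates no element of `F`. -/
def Y1Complex {P : Type u} [PartialOrder P] (A B : Finset P) : SComplex P where
  faces := {F | (∀ x ∈ F, x ∈ A) ∧ ∃ b ∈ B, ∀ a ∈ F, ¬ a ≤ b}
  down_closed := by
    rintro F G ⟨hFA, b, hb, hFb⟩ hGF
    exact ⟨fun x hx => hFA x (hGF hx), b, hb, fun a ha => hFb a (hGF ha)⟩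

/-- `Y₂`: the simplicial complex on `B` whose faces are the subsets `F ⊆ B`
such that some `a ∈ A` is dominated by no element of `F`. -/
def Y2Complex {P : Type u} [PartialOrder P] (A B : Finset P) : SComplex P where
  faces := {F | (∀ x ∈ F, x ∈ B) ∧ ∃ a ∈ A, ∀ b ∈ F, ¬ a ≤ b}
  down_closed := by
    rintro F G ⟨hFB, a, ha, hFa⟩ hGF
    exact ⟨fun x hx => hFB x (hGF hx), a, ha, fun b hb => hFa b (hGF hb)⟩

/-- The restriction `Δ(n,P)|_R` of the Stanley–Reisner complex of the
letterplace ideal `L(n,P)` to the vertex set `R`. -/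
def deltaRes (n : ℕ) (P : Type u) [PartialOrder P] (R : Finset (Fin n × P)) :
    SComplex (Fin n × P) where
  faces := {F | F ⊆ R ∧ ¬ ∃ c : Fin n → P, Monotone c ∧ ∀ i, (i, c i) ∈ F}
  down_closed := by
    rintro F G ⟨hFR, hF⟩ hGF
    exact ⟨hGF.trans hFR, fun ⟨c, hc, hm⟩ => hF ⟨c, hc, fun i => hGF (hm i)⟩⟩

/-- `A` is a maximal antichain of the poset `P`. -/
def IsMaxAntichainFinset {P : Type u} [PartialOrder P] (A : Finset P) : Prop :=
  IsAntichain (· ≤ ·) (A : Set P) ∧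
    ∀ B : Finset P, IsAntichain (· ≤ ·) (B : Set P) → A ⊆ B → A = B

/-- The maximal cardinality of an antichain in the finite poset `P`. -/
def maxAntichainCard (P : Type u) [PartialOrder P] [Fintype P] : ℕ :=
  Finset.sup (Finset.univ.filter fun A : Finset P => IsAntichain (· ≤ ·) (A : Set P))
    Finset.card

/-- The independence complex of a bipartite graph, with parts `A` and `B` and
edge relation `E`. -/
def bipIndep {A : Type u} {B : Type v} (E : A → B → Prop) : SComplex (A ⊕ B) where
  faces := {F | ∀ a b, Sum.inl a ∈ F → Sum.inr b ∈ F → ¬ E a b}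
  down_closed := by
    intro F G hF hGF a b ha hb
    exact hF a b (hGF ha) (hGF hb)

/-- The `A`-part of a finite subset of `A ⊕ (B ⊕ C)`. -/
def aPart {A B C : Type u} (F : Finset (A ⊕ B ⊕ C)) : Finset A :=
  F.preimage Sum.inl Sum.inl_injective.injOn

/-- The `B`-part of a finite subset of `A ⊕ (B ⊕ C)`. -/
def bPart {A B C : Type u} (F : Finset (A ⊕ B ⊕ C)) : Finset B :=
  F.preimage (Sum.inr ∘ Sum.inl) ((Sum.inr_injective.comp Sum.inl_injective).injOn)

/-- The `C`-part of a finite subset of `A ⊕ (B ⊕ C)`. -/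
def cPart {A B C : Type u} (F : Finset (A ⊕ B ⊕ C)) : Finset C :=
  F.preimage (Sum.inr ∘ Sum.inr) ((Sum.inr_injective.comp Sum.inr_injective).injOn)

/-- The simplicial complex `X` on `A ∪ B ∪ C` whose Stanley–Reisner ideal is
generated by the pure-`A` generators of `I_{AB}`, the pure-`C` generators of
`I_{BC}`, and the monomials `x_𝐚 x_b x_𝐜` with `x_𝐚 x_b ∈ I_{AB}` and
`x_b x_𝐜 ∈ I_{BC}`.  Its faces are the sets `𝐚 ∪ 𝐛 ∪ 𝐜` such that `𝐚` is a
face of `X_{AB}`, `𝐜` is a face of `X_{BC}`, and for each `b ∈ 𝐛` either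
`𝐚 ∪ {b}` is a face of `X_{AB}` or `{b} ∪ 𝐜` is a face of `X_{BC}`. -/
def glueComplex {A B C : Type u} (XA : SComplex (A ⊕ B)) (XC : SComplex (B ⊕ C)) :
    SComplex (A ⊕ B ⊕ C) where
  faces := {F |
    (aPart F).map ⟨Sum.inl, Sum.inl_injective⟩ ∈ XA.faces ∧
    (cPart F).map ⟨Sum.inr, Sum.inr_injective⟩ ∈ XC.faces ∧
    ∀ b ∈ bPart F,
      insert (Sum.inr b) ((aPart F).map ⟨Sum.inl, Sum.inl_injective⟩) ∈ XA.faces ∨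
      insert (Sum.inl b) ((cPart F).map ⟨Sum.inr, Sum.inr_injective⟩) ∈ XC.faces}
  down_closed := by
    intro F G hF hGF
    have hA : aPart G ⊆ aPart F := fun x hx => by
      simp only [aPart, Finset.mem_preimage] at hx ⊢
      exact hGF hx
    have hB : bPart G ⊆ bPart F := fun x hx => by
      simp only [bPart, Finset.mem_preimage] at hx ⊢
      exact hGF hx
    have hC : cPart G ⊆ cPart F := fun x hx => by
      simp only [cPart, Finset.mem_preimage] at hx ⊢
      exact hGF hx
    refine ⟨XA.down_closed hF.1 (Finset.map_subset_map.mpr hA),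
            XC.down_closed hF.2.1 (Finset.map_subset_map.mpr hC),
            fun b hb => ?_⟩
    rcases hF.2.2 b (hB hb) with h | h
    · exact Or.inl (XA.down_closed h
        (Finset.insert_subset_insert _ (Finset.map_subset_map.mpr hA)))
    · exact Or.inr (XC.down_closed h
        (Finset.insert_subset_insert _ (Finset.map_subset_map.mpr hC)))

/-!
Merge the two copies of the vertices of `B` one at a time. Merging the copies of the vertices in
`M ⊆ B` gives `partialGlue XA XC M`: for `M = ∅` this is the join, since by the hypothesis on
minimal nonfaces a set is a face of `X_{AB}` as soon as its `A`-part and each of its extensions by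
one vertex of `B` are; for `M = B` it is `X`, up to the unused second copy of `B`.

Merging one more vertex `b₀` is a homotopy equivalence. Merging adds the weight of the second copy
of `b₀` to the first. The homotopy inverse splits this weight back between the two copies in a
ratio that depends continuously on how far the `A`- and `C`-coordinates are from allowing each
copy; to make the copy that receives weight genuinely allowed, the small `A`- and `C`-coordinates
are first truncated away. Both composites are joined to the identity by straight-line homotopies,
which stay in the realization because their ends always lie in a common face.
-/

namespace SComplex

lemma ext {V : Type u} {X Y : SComplex V} (h : X.faces = Y.faces) : X = Y := by
  cases X
  cases Y
  cases h
  rfl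

section Realization

variable {V : Type u} [Fintype V]

def finSupport (f : V → ℝ) : Finset V := univ.filter fun v => f v ≠ 0

@[simp] lemma mem_finSupport {f : V → ℝ} {v : V} : v ∈ finSupport f ↔ f v ≠ 0 := by
  simp [finSupport]

lemma finSupport_smul {c : ℝ} (hc : c ≠ 0) (f : V → ℝ) :
    finSupport (c • f) = finSupport f := by
  ext v
  simp [hc]

lemma mem_realization_iff {X : SComplex V} {f : V → ℝ} :
    f ∈ X.realization ↔ (∀ v, 0 ≤ f v) ∧ ∑ v, f v = 1 ∧ finSupport f ∈ X.faces := by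
  refine and_congr_right fun _ => and_congr_right fun _ => ⟨?_, fun h => ⟨_, h, by simp⟩⟩
  rintro ⟨F, hF, hsupp⟩
  exact X.down_closed hF fun v hv => hsupp v (mem_finSupport.mp hv)

lemma sum_eq_one_of_mem_realization {X : SComplex V} {f : V → ℝ} (hf : f ∈ X.realization) :
    ∑ v, f v = 1 :=
  (mem_realization_iff.mp hf).2.1

def normalize (g : V → ℝ) : V → ℝ := (∑ v, g v)⁻¹ • g

lemma finSupport_normalize {g : V → ℝ} (h : ∑ v, g v ≠ 0) :
    finSupport (normalize g) = finSupport g :=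
  finSupport_smul (inv_ne_zero h) g

lemma normalize_mem_realization {X : SComplex V} {g : V → ℝ} (h0 : ∀ v, 0 ≤ g v)
    (hpos : 0 < ∑ v, g v) (hg : finSupport g ∈ X.faces) : normalize g ∈ X.realization := by
  refine mem_realization_iff.mpr ⟨fun v => ?_, ?_, ?_⟩
  · exact mul_nonneg (inv_nonneg.mpr hpos.le) (h0 v)
  · simp only [normalize, Pi.smul_apply, smul_eq_mul, ← Finset.mul_sum]
    exact inv_mul_cancel₀ hpos.ne'
  · rwa [finSupport_normalize hpos.ne']

lemma _root_.ContinuousOn.normalize {T : Type*} [TopologicalSpace T] {g : T → V → ℝ}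
    {s : Set T} (hg : ContinuousOn g s) (h : ∀ x ∈ s, ∑ v, g x v ≠ 0) :
    ContinuousOn (fun x => normalize (g x)) s := by
  have hsum : ContinuousOn (fun x => ∑ v, g x v) s :=
    continuousOn_finsetSum _ fun v _ => (continuous_apply v).comp_continuousOn hg
  exact (hsum.inv₀ h).smul hg

def realizationMap {W : Type v} [Fintype W] {X : SComplex V} {Y : SComplex W}
    (g : (V → ℝ) → W → ℝ) (hg : ContinuousOn g X.realization)
    (hmaps : ∀ f ∈ X.realization, g f ∈ Y.realization) : C(X.realization, Y.realization) :=
  ⟨fun f => ⟨g f, hmaps f f.2⟩, (hg.mapsToRestrict fun f hf => hmaps f hf :)⟩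

/-- On a common face, the straight segment between two points of a realization stays in it. -/
def lineHomotopy [DecidableEq V] {T : Type v} [TopologicalSpace T] {X : SComplex V}
    (φ₀ φ₁ : C(T, X.realization))
    (h : ∀ t, finSupport (φ₀ t : V → ℝ) ∪ finSupport (φ₁ t : V → ℝ) ∈ X.faces) :
    φ₀.Homotopy φ₁ where
  toFun p := ⟨fun v =>
      (1 - p.1 : ℝ) * (φ₀ p.2 : V → ℝ) v + p.1 * (φ₁ p.2 : V → ℝ) v, by
    obtain ⟨h0, h1, -⟩ := mem_realization_iff.mp (φ₀ p.2).2
    obtain ⟨g0, g1, -⟩ := mem_realization_iff.mp (φ₁ p.2).2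
    have ht0 : (0 : ℝ) ≤ p.1 := p.1.2.1
    have ht1 : (p.1 : ℝ) ≤ 1 := p.1.2.2
    refine mem_realization_iff.mpr ⟨fun v => ?_, ?_, X.down_closed (h p.2) fun v hv => ?_⟩
    · exact add_nonneg (mul_nonneg (by linarith) (h0 v)) (mul_nonneg ht0 (g0 v))
    · rw [Finset.sum_add_distrib, ← Finset.mul_sum, ← Finset.mul_sum, h1, g1]
      ring
    · by_contra hv'
      simp only [Finset.mem_union, mem_finSupport, not_or, not_not] at hv'
      simp [hv'.1, hv'.2] at hv⟩
  continuous_toFun := by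
    refine Continuous.subtype_mk (continuous_pi fun v => ?_) _
    have hφ₀ : Continuous fun p : unitInterval × T => (φ₀ p.2 : V → ℝ) v :=
      (continuous_apply v).comp (continuous_subtype_val.comp (φ₀.continuous.comp continuous_snd))
    have hφ₁ : Continuous fun p : unitInterval × T => (φ₁ p.2 : V → ℝ) v :=
      (continuous_apply v).comp (continuous_subtype_val.comp (φ₁.continuous.comp continuous_snd))
    have ht : Continuous fun p : unitInterval × T => (p.1 : ℝ) :=
      continuous_subtype_val.comp continuous_fst
    exact ((continuous_const.sub ht).mul hφ₀).add (ht.mul hφ₁)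
  map_zero_left t := by ext v; simp
  map_one_left t := by ext v; simp

lemma homotopic_of_finSupport_subset {T : Type v} [TopologicalSpace T] {X : SComplex V}
    (φ₀ φ₁ : C(T, X.realization))
    (h : ∀ t, finSupport (φ₁ t : V → ℝ) ⊆ finSupport (φ₀ t : V → ℝ)) :
    φ₀.Homotopic φ₁ :=
  ⟨lineHomotopy φ₀ φ₁ fun t => by
    rw [Finset.union_eq_left.mpr (h t)]
    exact (mem_realization_iff.mp (φ₀ t).2).2.2⟩

section Embedding

variable {W : Type v} {X : SComplex V} {Y : SComplex W} {e : W ↪ V}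

lemma eq_zero_of_notMem_range (hX : ∀ F ∈ X.faces, ∀ v ∈ F, v ∈ Set.range e)
    {f : V → ℝ} (hf : f ∈ X.realization) {v : V} (hv : v ∉ Set.range e) : f v = 0 := by
  by_contra hfv
  exact hv (hX _ (mem_realization_iff.mp hf).2.2 v (mem_finSupport.mpr hfv))

variable [Fintype W]

lemma finSupport_extend (g : W → ℝ) :
    finSupport (Function.extend e g 0) = (finSupport g).map e := by
  ext v
  by_cases hv : v ∈ Set.range e
  · obtain ⟨w, rfl⟩ := hv
    simp [e.injective.extend_apply]
  · simp only [mem_finSupport, Function.extend_apply' _ _ _ hv, Finset.mem_map]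
    exact ⟨fun h => absurd rfl h, fun ⟨w, _, hw⟩ => (hv ⟨w, hw⟩).elim⟩

lemma extend_mem_realization (hY : ∀ G, G ∈ Y.faces ↔ G.map e ∈ X.faces) {g : W → ℝ}
    (hg : g ∈ Y.realization) : Function.extend e g 0 ∈ X.realization := by
  obtain ⟨g0, g1, gF⟩ := mem_realization_iff.mp hg
  refine mem_realization_iff.mpr ⟨fun v => ?_, ?_, ?_⟩
  · by_cases hv : v ∈ Set.range e
    · obtain ⟨w, rfl⟩ := hv
      simpa [e.injective.extend_apply] using g0 w
    · simp [Function.extend_apply' _ _ _ hv]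
  · rw [← g1]
    exact (Fintype.sum_of_injective e e.injective g (Function.extend e g 0)
      (fun v hv => Function.extend_apply' _ _ _ hv)
      fun w => (e.injective.extend_apply g 0 w).symm).symm
  · rwa [finSupport_extend, ← hY]

lemma comp_mem_realization (hX : ∀ F ∈ X.faces, ∀ v ∈ F, v ∈ Set.range e)
    (hY : ∀ G, G ∈ Y.faces ↔ G.map e ∈ X.faces) {f : V → ℝ} (hf : f ∈ X.realization) :
    f ∘ e ∈ Y.realization := by
  obtain ⟨f0, f1, fF⟩ := mem_realization_iff.mp hf
  refine mem_realization_iff.mpr ⟨fun w => f0 (e w), ?_, ?_⟩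
  · rw [← f1]
    exact Fintype.sum_of_injective e e.injective _ _
      (fun v hv => eq_zero_of_notMem_range hX hf hv) fun _ => rfl
  · rw [hY]
    convert fF using 1
    ext v
    simp only [Finset.mem_map, mem_finSupport, Function.comp_apply]
    constructor
    · rintro ⟨w, hw, rfl⟩
      exact hw
    · intro hv
      obtain ⟨w, rfl⟩ := hX _ fF v (mem_finSupport.mpr hv)
      exact ⟨w, hv, rfl⟩

variable (X Y e) in
/-- Realizations do not see vertices that lie in no face. -/
def realizationHomeomorphOfEmbedding (hX : ∀ F ∈ X.faces, ∀ v ∈ F, v ∈ Set.range e)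
    (hY : ∀ G, G ∈ Y.faces ↔ G.map e ∈ X.faces) : Y.realization ≃ₜ X.realization where
  toFun g := ⟨Function.extend e g 0, extend_mem_realization hY g.2⟩
  invFun f := ⟨f ∘ e, comp_mem_realization hX hY f.2⟩
  left_inv g := by
    ext w
    exact e.injective.extend_apply (g : W → ℝ) 0 w
  right_inv f := by
    refine Subtype.ext (funext fun v => ?_)
    by_cases hv : v ∈ Set.range e
    · obtain ⟨w, rfl⟩ := hv
      exact e.injective.extend_apply _ _ w
    · exact (Function.extend_apply' _ _ _ hv).trans
        (eq_zero_of_notMem_range hX f.2 hv).symm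
  continuous_toFun := by
    refine Continuous.subtype_mk (continuous_pi fun v => ?_) _
    by_cases hv : v ∈ Set.range e
    · obtain ⟨w, rfl⟩ := hv
      simp only [e.injective.extend_apply]
      exact (continuous_apply w).comp continuous_subtype_val
    · simp only [Function.extend_apply' _ _ _ hv]
      exact continuous_const
  continuous_invFun :=
    ((continuous_pi fun w => continuous_apply (e w)).comp continuous_subtype_val).subtype_mk _

end Embedding

end Realization

lemma HEquiv.trans {V : Type u} {W : Type v} {U : Type w} [Fintype V] [Fintype W] [Fintype U]
    {X : SComplex V} {Y : SComplex W} {Z : SComplex U} (h₁ : HEquiv X Y) (h₂ : HEquiv Y Z) :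
    HEquiv X Z :=
  h₁.elim fun e₁ => h₂.elim fun e₂ => ⟨e₁.trans e₂⟩

lemma mem_faces_iff_of_minimal_nonfaces {V : Type u} [DecidableEq V] {β : Type v}
    (X : SComplex V) (e : β ↪ V)
    (hX : ∀ N : Finset V, N ∉ X.faces → (∀ N' : Finset V, N' ⊂ N → N' ∈ X.faces) →
      (N.preimage e e.injective.injOn).card ≤ 1)
    (G : Finset V) :
    G ∈ X.faces ↔ G.filter (· ∉ Set.range e) ∈ X.faces ∧
      ∀ b ∈ G.preimage e e.injective.injOn,
        insert (e b) (G.filter (· ∉ Set.range e)) ∈ X.faces := by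
  refine ⟨fun hG => ⟨X.down_closed hG (Finset.filter_subset _ _), fun b hb => X.down_closed hG
    (Finset.insert_subset (Finset.mem_preimage.mp hb) (Finset.filter_subset _ _))⟩,
    fun ⟨hG₀, hG₁⟩ => by_contra fun hG => ?_⟩
  obtain ⟨N, hNG, hN⟩ := exists_minimal_le_of_wellFoundedLT (· ∉ X.faces) G hG
  have hcard := hX N hN.1 fun N' hN' => not_not.mp (hN.not_prop_of_lt hN')
  have houter : ∀ v ∈ N, v ∉ Set.range e → v ∈ G.filter (· ∉ Set.range e) :=
    fun v hv hve => Finset.mem_filter.mpr ⟨hNG hv, hve⟩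
  by_cases hb : ∃ b, e b ∈ N
  · obtain ⟨b, hb⟩ := hb
    refine hN.1 (X.down_closed (hG₁ b (Finset.mem_preimage.mpr (hNG hb))) fun v hv => ?_)
    by_cases hve : v ∈ Set.range e
    · obtain ⟨b', rfl⟩ := hve
      rw [Finset.card_le_one.mp hcard b' (Finset.mem_preimage.mpr hv) b
        (Finset.mem_preimage.mpr hb)]
      exact Finset.mem_insert_self _ _
    · exact Finset.mem_insert_of_mem (houter v hv hve)
  · refine hN.1 (X.down_closed hG₀ fun v hv => houter v hv ?_)
    rintro ⟨b, rfl⟩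
    exact hb ⟨b, hv⟩

end SComplex

open SComplex

section Obstruction

variable {ι : Type u} (Q : Finset ι → Prop)

/-- The value `1` for `S = ∅` plays the role of `inf ∅`: it exceeds every level `ε < 1`. -/
def obstructionAt (x : ι → ℝ) (S : Finset ι) : ℝ :=
  if Q S then 0 else if h : S.Nonempty then S.inf' h x else 1

lemma continuous_obstructionAt (S : Finset ι) :
    Continuous fun x : ι → ℝ => obstructionAt Q x S := by
  unfold obstructionAt
  split_ifs with hQ hS
  · exact continuous_const
  · convert Continuous.finset_inf' hS fun i _ => continuous_apply (A := fun _ : ι => ℝ) i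
      using 1
    exact funext fun x => (Finset.inf'_apply hS (fun i (x : ι → ℝ) => x i) x).symm
  · exact continuous_const

variable [Fintype ι]

/-- A continuous substitute for the failure of `Q` on the support of `x`
(`obstruction_eq_zero_iff`). -/
def obstruction (x : ι → ℝ) : ℝ :=
  univ.sup' univ_nonempty (obstructionAt Q x)

def truncate (ε : ℝ) (x : ι → ℝ) : ι → ℝ :=
  fun i => max (x i - min (obstruction Q x) ε) 0

lemma continuous_obstruction : Continuous (obstruction Q) := by
  unfold obstruction
  convert Continuous.finset_sup' univ_nonempty fun S _ => continuous_obstructionAt Q S using 1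
  exact funext fun x => (Finset.sup'_apply _ (fun S (x : ι → ℝ) => obstructionAt Q x S) x).symm

lemma continuous_truncate (ε : ℝ) : Continuous (truncate Q ε) :=
  continuous_pi fun i => (((continuous_apply i).sub
    ((continuous_obstruction Q).min continuous_const)).max continuous_const)

variable {Q} {x : ι → ℝ}

lemma obstructionAt_le (S : Finset ι) : obstructionAt Q x S ≤ obstruction Q x :=
  Finset.le_sup' _ (mem_univ S)

lemma obstruction_nonneg (hx : ∀ i, 0 ≤ x i) : 0 ≤ obstruction Q x := by
  refine le_trans ?_ (obstructionAt_le ∅)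
  unfold obstructionAt
  split_ifs <;> simp_all

lemma obstruction_eq_zero_iff (hQ : Antitone Q) (hx : ∀ i, 0 ≤ x i) :
    obstruction Q x = 0 ↔ Q (finSupport x) := by
  refine ⟨fun h => by_contra fun hQx => ?_, fun h => le_antisymm ?_ (obstruction_nonneg hx)⟩
  · have hle := (obstructionAt_le (Q := Q) (x := x) (finSupport x)).trans h.le
    unfold obstructionAt at hle
    rw [if_neg hQx] at hle
    split_ifs at hle with hne
    · obtain ⟨i, hi, hmin⟩ := Finset.exists_mem_eq_inf' hne x
      exact mem_finSupport.mp hi (le_antisymm (hmin ▸ hle) (hx i))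
    · linarith
  · refine Finset.sup'_le _ _ fun S _ => ?_
    unfold obstructionAt
    split_ifs with hQS hS
    · exact le_rfl
    · obtain ⟨i, hiS, hi⟩ : ∃ i ∈ S, x i = 0 := by
        by_contra! hall
        exact hQS (hQ (fun i hiS => mem_finSupport.mpr (hall i hiS)) h)
      exact (Finset.inf'_le x hiS).trans hi.le
    · rw [Finset.not_nonempty_iff_eq_empty.mp hS] at hQS
      exact absurd (hQ (Finset.empty_subset _) h) hQS

lemma truncate_nonneg (ε : ℝ) (i : ι) : 0 ≤ truncate Q ε x i :=
  le_max_right _ _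

lemma sub_le_truncate (ε : ℝ) (i : ι) : x i - ε ≤ truncate Q ε x i :=
  le_max_of_le_left (sub_le_sub_left (min_le_right _ _) _)

lemma sum_sub_card_mul_le_sum_truncate (ε : ℝ) :
    ∑ i, x i - Fintype.card ι * ε ≤ ∑ i, truncate Q ε x i := by
  rw [← nsmul_eq_mul, ← Finset.card_univ, ← Finset.sum_const, ← Finset.sum_sub_distrib]
  exact Finset.sum_le_sum fun i _ => sub_le_truncate ε i

lemma finSupport_truncate_subset (hx : ∀ i, 0 ≤ x i) {ε : ℝ} (hε : 0 ≤ ε) :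
    finSupport (truncate Q ε x) ⊆ finSupport x := by
  intro i hi
  rw [mem_finSupport] at hi ⊢
  intro hxi
  apply hi
  rw [truncate, hxi]
  exact max_eq_right (by linarith [le_min (obstruction_nonneg (Q := Q) hx) hε])

lemma truncate_spec {ε : ℝ} (hε : ε < 1) (h : obstruction Q x ≤ ε) :
    Q (finSupport (truncate Q ε x)) := by
  by_contra hQS
  have hle := obstructionAt_le (Q := Q) (x := x) (finSupport (truncate Q ε x))
  unfold obstructionAt at hle
  rw [if_neg hQS] at hle
  split_ifs at hle with hne
  · obtain ⟨i, hi, hmin⟩ := Finset.exists_mem_eq_inf' hne x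
    have hpos := mem_finSupport.mp hi
    simp only [truncate, min_eq_left h] at hpos
    exact hpos (max_eq_right (by linarith))
  · linarith

end Obstruction

section SplitRatio

def splitRatio (ε α γ : ℝ) : ℝ := (ε + min γ ε - min α ε) / (2 * ε)

variable {ε α γ : ℝ}

lemma continuous_splitRatio (ε : ℝ) :
    Continuous fun p : ℝ × ℝ => splitRatio ε p.1 p.2 := by
  unfold splitRatio
  fun_prop

lemma splitRatio_nonneg (hε : 0 < ε) (hγ : 0 ≤ γ) : 0 ≤ splitRatio ε α γ :=
  div_nonneg (by linarith [min_le_right α ε, le_min hγ hε.le]) (by linarith)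

lemma one_sub_splitRatio (hε : ε ≠ 0) : 1 - splitRatio ε α γ = splitRatio ε γ α := by
  unfold splitRatio
  field_simp
  ring

lemma splitRatio_le_one (hε : 0 < ε) (hα : 0 ≤ α) : splitRatio ε α γ ≤ 1 := by
  rw [← sub_nonneg, one_sub_splitRatio hε.ne']
  exact splitRatio_nonneg hε hα

lemma le_of_splitRatio_ne_zero (hε : 0 < ε) (h : α = 0 ∨ γ = 0)
    (hne : splitRatio ε α γ ≠ 0) : α ≤ ε := by
  rcases h with rfl | rfl
  · exact hε.le
  · by_contra! hlt
    apply hne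
    simp [splitRatio, min_eq_right hlt.le, min_eq_left hε.le]

end SplitRatio

lemma truncate_spec_of_splitRatio_ne_zero {ι : Type u} {κ : Type v} [Fintype ι] [Fintype κ]
    {Q : Finset ι → Prop} {R : Finset κ → Prop} (hQ : Antitone Q) (hR : Antitone R)
    {x : ι → ℝ} {y : κ → ℝ} (hx : ∀ i, 0 ≤ x i) (hy : ∀ k, 0 ≤ y k) {ε : ℝ}
    (hε₀ : 0 < ε) (hε₁ : ε < 1) (h : Q (finSupport x) ∨ R (finSupport y))
    (hne : splitRatio ε (obstruction Q x) (obstruction R y) ≠ 0) :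
    Q (finSupport (truncate Q ε x)) :=
  truncate_spec hε₁ <| le_of_splitRatio_ne_zero hε₀
    (h.imp (obstruction_eq_zero_iff hQ hx).mpr (obstruction_eq_zero_iff hR hy).mpr) hne

abbrev JoinVertex (A B C : Type u) : Type u := (A ⊕ B) ⊕ (B ⊕ C)

namespace JoinVertex

variable {A B C : Type u}

def partA (F : Finset (JoinVertex A B C)) : Finset A :=
  F.preimage (fun a => .inl (.inl a)) fun _ _ _ _ h => by simpa using h

def partB₁ (F : Finset (JoinVertex A B C)) : Finset B :=
  F.preimage (fun b => .inl (.inr b)) fun _ _ _ _ h => by simpa using h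

def partB₂ (F : Finset (JoinVertex A B C)) : Finset B :=
  F.preimage (fun b => .inr (.inl b)) fun _ _ _ _ h => by simpa using h

def partC (F : Finset (JoinVertex A B C)) : Finset C :=
  F.preimage (fun c => .inr (.inr c)) fun _ _ _ _ h => by simpa using h

def coordA (f : JoinVertex A B C → ℝ) : A → ℝ := fun a => f (.inl (.inl a))
def coordC (f : JoinVertex A B C → ℝ) : C → ℝ := fun c => f (.inr (.inr c))

variable {F G : Finset (JoinVertex A B C)}

@[simp] lemma mem_partA {a : A} : a ∈ partA F ↔ .inl (.inl a) ∈ F := Finset.mem_preimage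
@[simp] lemma mem_partB₁ {b : B} : b ∈ partB₁ F ↔ .inl (.inr b) ∈ F := Finset.mem_preimage
@[simp] lemma mem_partB₂ {b : B} : b ∈ partB₂ F ↔ .inr (.inl b) ∈ F := Finset.mem_preimage
@[simp] lemma mem_partC {c : C} : c ∈ partC F ↔ .inr (.inr c) ∈ F := Finset.mem_preimage

lemma partA_mono (h : G ⊆ F) : partA G ⊆ partA F :=
  fun _ ha => mem_partA.mpr (h (mem_partA.mp ha))

lemma partC_mono (h : G ⊆ F) : partC G ⊆ partC F :=
  fun _ hc => mem_partC.mpr (h (mem_partC.mp hc))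

lemma partA_union : partA (F ∪ G) = partA F ∪ partA G := by ext; simp
lemma partC_union : partC (F ∪ G) = partC F ∪ partC G := by ext; simp

variable [Fintype A] [Fintype B] [Fintype C]

lemma partA_finSupport (f : JoinVertex A B C → ℝ) :
    partA (finSupport f) = finSupport (coordA f) := by
  ext; simp [coordA]

lemma partC_finSupport (f : JoinVertex A B C → ℝ) :
    partC (finSupport f) = finSupport (coordC f) := by
  ext; simp [coordC]

lemma sum_eq (g : JoinVertex A B C → ℝ) :
    ∑ v, g v = ∑ a, g (.inl (.inl a)) + ∑ b, g (.inl (.inr b)) + ∑ b, g (.inr (.inl b))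
      + ∑ c, g (.inr (.inr c)) := by
  simp only [Fintype.sum_sum_type]
  ring

end JoinVertex

open JoinVertex

section PartialGlue

variable {A B C : Type u} (XA : SComplex (A ⊕ B)) (XC : SComplex (B ⊕ C))

def liftA (S : Finset A) : Finset (A ⊕ B) := S.map ⟨Sum.inl, Sum.inl_injective⟩
def liftC (S : Finset C) : Finset (B ⊕ C) := S.map ⟨Sum.inr, Sum.inr_injective⟩

def CompatA (S : Finset A) (b : B) : Prop := insert (Sum.inr b) (liftA S) ∈ XA.faces
def CompatC (S : Finset C) (b : B) : Prop := insert (Sum.inl b) (liftC S) ∈ XC.faces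

variable {XA XC}

lemma liftA_mem_of_subset {S T : Finset A} (h : S ⊆ T) (hT : liftA T ∈ XA.faces) :
    liftA S ∈ XA.faces :=
  XA.down_closed hT (Finset.map_subset_map.mpr h)

lemma liftC_mem_of_subset {S T : Finset C} (h : S ⊆ T) (hT : liftC T ∈ XC.faces) :
    liftC S ∈ XC.faces :=
  XC.down_closed hT (Finset.map_subset_map.mpr h)

lemma antitone_compatA (b : B) : Antitone fun S => CompatA XA S b := fun _ _ h hT =>
  XA.down_closed hT (Finset.insert_subset_insert _ (Finset.map_subset_map.mpr h))

lemma antitone_compatC (b : B) : Antitone fun S => CompatC XC S b := fun _ _ h hT =>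
  XC.down_closed hT (Finset.insert_subset_insert _ (Finset.map_subset_map.mpr h))

variable (XA XC)

/-- The complex in which the two copies of each `b ∈ M` have been merged into the copy in
`A ⊕ B`, subject to the condition defining `glueComplex`, while the vertices of `B \ M` are
still split as in the join. -/
def partialGlue (M : Finset B) : SComplex (JoinVertex A B C) where
  faces := {F | liftA (partA F) ∈ XA.faces ∧ liftC (partC F) ∈ XC.faces ∧
    (∀ b ∈ partB₁ F, CompatA XA (partA F) b ∨ b ∈ M ∧ CompatC XC (partC F) b) ∧
    ∀ b ∈ partB₂ F, b ∉ M ∧ CompatC XC (partC F) b}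
  down_closed := by
    rintro F G ⟨hA, hC, h₁, h₂⟩ hGF
    have hGA := partA_mono hGF
    have hGC := partC_mono hGF
    refine ⟨liftA_mem_of_subset hGA hA, liftC_mem_of_subset hGC hC, fun b hb => ?_,
      fun b hb => ?_⟩
    · rcases h₁ b (mem_partB₁.mpr (hGF (mem_partB₁.mp hb))) with h | ⟨hM, h⟩
      · exact .inl (antitone_compatA b hGA h)
      · exact .inr ⟨hM, antitone_compatC b hGC h⟩
    · obtain ⟨hM, h⟩ := h₂ b (mem_partB₂.mpr (hGF (mem_partB₂.mp hb)))
      exact ⟨hM, antitone_compatC b hGC h⟩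

variable {XA XC}

/-- The conditions on the `B`-vertices only involve the `A`- and `C`-parts of a face. -/
lemma union_mem_partialGlue {M : Finset B} {F G : Finset (JoinVertex A B C)}
    (hF : F ∈ (partialGlue XA XC M).faces) (hG : G ∈ (partialGlue XA XC M).faces)
    (hA : partA F = partA G) (hC : partC F = partC G) :
    F ∪ G ∈ (partialGlue XA XC M).faces := by
  have hA' : partA (F ∪ G) = partA F := by rw [partA_union, ← hA, Finset.union_self]
  have hC' : partC (F ∪ G) = partC F := by rw [partC_union, ← hC, Finset.union_self]
  obtain ⟨hFA, hFC, hF₁, hF₂⟩ := hF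
  obtain ⟨-, -, hG₁, hG₂⟩ := hG
  refine ⟨hA' ▸ hFA, hC' ▸ hFC, fun b hb => ?_, fun b hb => ?_⟩ <;>
    simp only [hA', hC', hA, hC] at hF₁ hF₂ hG₁ hG₂ ⊢ <;>
    simp only [mem_partB₁, mem_partB₂, Finset.mem_union] at hb
  · exact hb.elim (fun h => hF₁ b (mem_partB₁.mpr h)) fun h => hG₁ b (mem_partB₁.mpr h)
  · exact hb.elim (fun h => hF₂ b (mem_partB₂.mpr h)) fun h => hG₂ b (mem_partB₂.mpr h)

variable [Fintype A] [Fintype B] [Fintype C]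

lemma finSupport_mem_partialGlue_iff {M : Finset B} {g : JoinVertex A B C → ℝ} :
    finSupport g ∈ (partialGlue XA XC M).faces ↔
      liftA (finSupport (coordA g)) ∈ XA.faces ∧ liftC (finSupport (coordC g)) ∈ XC.faces ∧
      (∀ b, g (.inl (.inr b)) ≠ 0 → CompatA XA (finSupport (coordA g)) b ∨
        b ∈ M ∧ CompatC XC (finSupport (coordC g)) b) ∧
      ∀ b, g (.inr (.inl b)) ≠ 0 → b ∉ M ∧ CompatC XC (finSupport (coordC g)) b := by
  simp only [partialGlue, Set.mem_ofPred_eq, partA_finSupport, partC_finSupport, mem_partB₁,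
    mem_partB₂, mem_finSupport]

lemma apply_inr_inl_eq_zero {M : Finset B} {f : JoinVertex A B C → ℝ}
    (hf : f ∈ (partialGlue XA XC M).realization) {b : B} (hb : b ∈ M) :
    f (.inr (.inl b)) = 0 := by
  by_contra h
  exact ((finSupport_mem_partialGlue_iff.mp (mem_realization_iff.mp hf).2.2).2.2.2 b h).1 hb

end PartialGlue

lemma Fintype.sum_eq_sum_of_eq_off_pair {V : Type u} [Fintype V] {f g : V → ℝ} {v w : V}
    (hvw : v ≠ w) (hoff : ∀ u, u ≠ v → u ≠ w → f u = g u)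
    (hpair : f v + f w = g v + g w) :
    ∑ u, f u = ∑ u, g u := by
  rw [← sub_eq_zero, ← Finset.sum_sub_distrib,
    Fintype.sum_eq_add v w hvw fun u hu => sub_eq_zero.mpr (hoff u hu.1 hu.2)]
  linarith

section MergeSplit

variable {A B C : Type u} (b₀ : B)

def merge (f : JoinVertex A B C → ℝ) : JoinVertex A B C → ℝ
  | .inl (.inr b) =>
      if b = b₀ then f (.inl (.inr b₀)) + f (.inr (.inl b₀)) else f (.inl (.inr b))
  | .inr (.inl b) => if b = b₀ then 0 else f (.inr (.inl b))
  | v => f v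

def split (s : ℝ) (f : JoinVertex A B C → ℝ) : JoinVertex A B C → ℝ
  | .inl (.inr b) => if b = b₀ then s * f (.inl (.inr b₀)) else f (.inl (.inr b))
  | .inr (.inl b) =>
      if b = b₀ then (1 - s) * f (.inl (.inr b₀)) + f (.inr (.inl b₀)) else f (.inr (.inl b))
  | v => f v

variable {b₀}

lemma merge_nonneg {f : JoinVertex A B C → ℝ} (hf : ∀ v, 0 ≤ f v) (v : JoinVertex A B C) :
    0 ≤ merge b₀ f v := by
  rcases v with (a | b) | (b | c) <;> simp only [merge] <;> (try split_ifs) <;>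
    first | exact le_rfl | exact hf _ | exact add_nonneg (hf _) (hf _)

lemma split_nonneg {s : ℝ} (hs₀ : 0 ≤ s) (hs₁ : s ≤ 1) {f : JoinVertex A B C → ℝ}
    (hf : ∀ v, 0 ≤ f v) (v : JoinVertex A B C) : 0 ≤ split b₀ s f v := by
  rcases v with (a | b) | (b | c) <;> simp only [split] <;> (try split_ifs) <;>
    first
    | exact hf _
    | exact mul_nonneg hs₀ (hf _)
    | exact add_nonneg (mul_nonneg (sub_nonneg.mpr hs₁) (hf _)) (hf _)

lemma merge_split (s : ℝ) (f : JoinVertex A B C → ℝ) :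
    merge b₀ (split b₀ s f) = merge b₀ f := by
  funext v
  rcases v with (a | b) | (b | c) <;> simp only [merge, split, ↓reduceIte] <;>
    (try split_ifs) <;> ring

lemma merge_smul (c : ℝ) (f : JoinVertex A B C → ℝ) :
    merge b₀ (c • f) = c • merge b₀ f := by
  funext v
  rcases v with (a | b) | (b | c) <;> simp only [merge, Pi.smul_apply, smul_eq_mul] <;>
    split_ifs <;> ring

lemma merge_eq_self {f : JoinVertex A B C → ℝ} (h : f (.inr (.inl b₀)) = 0) :
    merge b₀ f = f := by
  funext v
  rcases v with (a | b) | (b | c) <;> simp only [merge] <;> split_ifs with hb <;> subst_vars <;>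
    simp [h]

lemma continuous_merge : Continuous (merge (A := A) (C := C) b₀) := by
  refine continuous_pi fun v => ?_
  rcases v with (a | b) | (b | c) <;> simp only [merge] <;> (try split_ifs) <;> fun_prop

lemma continuous_split :
    Continuous fun p : ℝ × (JoinVertex A B C → ℝ) => split b₀ p.1 p.2 := by
  refine continuous_pi fun v => ?_
  rcases v with (a | b) | (b | c) <;> simp only [split] <;> (try split_ifs) <;> fun_prop

lemma finSupport_merge_subset [Fintype A] [Fintype B] [Fintype C]
    {f g : JoinVertex A B C → ℝ} (hf : ∀ v, 0 ≤ f v) (h : finSupport g ⊆ finSupport f) :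
    finSupport (merge b₀ g) ⊆ finSupport (merge b₀ f) := by
  have h' : ∀ v, g v ≠ 0 → f v ≠ 0 := fun v hv =>
    mem_finSupport.mp (h (mem_finSupport.mpr hv))
  intro v hv
  simp only [mem_finSupport] at hv ⊢
  rcases v with (a | b) | (b | c) <;> simp only [merge] at hv ⊢ <;> try exact h' _ hv
  · split_ifs at hv ⊢ with hb
    · intro hsum
      rw [add_eq_zero_iff_of_nonneg (hf _) (hf _)] at hsum
      by_cases hg₁ : g (.inl (.inr b₀)) = 0
      · exact h' _ (by simpa [hg₁] using hv) hsum.2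
      · exact h' _ hg₁ hsum.1
    · exact h' _ hv
  · split_ifs at hv ⊢
    · exact hv
    · exact h' _ hv

variable [Fintype A] [Fintype B] [Fintype C]

lemma sum_merge (f : JoinVertex A B C → ℝ) : ∑ v, merge b₀ f v = ∑ v, f v :=
  Fintype.sum_eq_sum_of_eq_off_pair (v := .inl (.inr b₀)) (w := .inr (.inl b₀)) (by simp)
    (by rintro ((a | b) | (b | c)) h₁ h₂ <;> simp_all [merge]) (by simp [merge])

lemma sum_split (s : ℝ) (f : JoinVertex A B C → ℝ) : ∑ v, split b₀ s f v = ∑ v, f v :=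
  Fintype.sum_eq_sum_of_eq_off_pair (v := .inl (.inr b₀)) (w := .inr (.inl b₀)) (by simp)
    (by rintro ((a | b) | (b | c)) h₁ h₂ <;> simp_all [split]) (by simp [split]; ring)

end MergeSplit

section Step

variable {A B C : Type u} [Fintype A] [Fintype C]

/-- Small enough for truncation to keep a positive part of the total weight `1`. -/
def cutoff (A C : Type u) [Fintype A] [Fintype C] : ℝ :=
  (Fintype.card A + Fintype.card C + 2 : ℝ)⁻¹

lemma cutoff_pos : 0 < cutoff A C := by
  unfold cutoff
  positivity

lemma card_add_one_mul_cutoff_lt_one :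
    (Fintype.card A + Fintype.card C + 1) * cutoff A C < 1 := by
  unfold cutoff
  rw [← div_eq_mul_inv, div_lt_one (by positivity)]
  linarith

lemma cutoff_lt_one : cutoff A C < 1 := by
  have := card_add_one_mul_cutoff_lt_one (A := A) (C := C)
  nlinarith [cutoff_pos (A := A) (C := C),
    (by positivity : (0 : ℝ) ≤ Fintype.card A + Fintype.card C)]

variable (XA : SComplex (A ⊕ B)) (XC : SComplex (B ⊕ C)) (b₀ : B)

def truncateAC (ε : ℝ) (f : JoinVertex A B C → ℝ) : JoinVertex A B C → ℝ
  | .inl (.inl a) => truncate (CompatA XA · b₀) ε (coordA f) a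
  | .inr (.inr c) => truncate (CompatC XC · b₀) ε (coordC f) c
  | v => f v

/-- The share of the merged weight at `b₀` that goes back to its copy in `A ⊕ B`. -/
def ratio (f : JoinVertex A B C → ℝ) : ℝ :=
  splitRatio (cutoff A C) (obstruction (CompatA XA · b₀) (coordA f))
    (obstruction (CompatC XC · b₀) (coordC f))

variable [Fintype B] in
def shrink (f : JoinVertex A B C → ℝ) : JoinVertex A B C → ℝ :=
  normalize (truncateAC XA XC b₀ (cutoff A C) f)

variable [Fintype B] in
def unmerge (f : JoinVertex A B C → ℝ) : JoinVertex A B C → ℝ :=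
  normalize (split b₀ (ratio XA XC b₀ f) (truncateAC XA XC b₀ (cutoff A C) f))

variable {XA XC b₀} {ε : ℝ} {f : JoinVertex A B C → ℝ}

lemma truncateAC_nonneg (hf : ∀ v, 0 ≤ f v) (v : JoinVertex A B C) :
    0 ≤ truncateAC XA XC b₀ ε f v := by
  rcases v with (a | b) | (b | c)
  exacts [truncate_nonneg _ _, hf _, hf _, truncate_nonneg _ _]

lemma continuous_truncateAC : Continuous (truncateAC XA XC b₀ ε) := by
  refine continuous_pi fun v => ?_
  rcases v with (a | b) | (b | c)
  · exact (continuous_apply a).comp ((continuous_truncate _ ε).comp (by unfold coordA; fun_prop))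
  · exact continuous_apply _
  · exact continuous_apply _
  · exact (continuous_apply c).comp ((continuous_truncate _ ε).comp (by unfold coordC; fun_prop))

lemma continuous_ratio : Continuous (ratio XA XC b₀) :=
  (continuous_splitRatio _).comp
    (((continuous_obstruction _).comp (by unfold coordA; fun_prop)).prodMk
      ((continuous_obstruction _).comp (by unfold coordC; fun_prop)))

variable [Fintype B]

lemma finSupport_truncateAC_subset (hf : ∀ v, 0 ≤ f v) (hε : 0 ≤ ε) :
    finSupport (truncateAC XA XC b₀ ε f) ⊆ finSupport f := by
  intro v hv
  rw [mem_finSupport] at hv ⊢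
  rcases v with (a | b) | (b | c)
  · exact (mem_finSupport (f := coordA f)).mp
      (finSupport_truncate_subset (x := coordA f) (fun a => hf _) hε (mem_finSupport.mpr hv))
  · exact hv
  · exact hv
  · exact (mem_finSupport (f := coordC f)).mp
      (finSupport_truncate_subset (x := coordC f) (fun c => hf _) hε (mem_finSupport.mpr hv))

lemma sum_truncateAC_pos (hf1 : ∑ v, f v = 1) :
    0 < ∑ v, truncateAC XA XC b₀ (cutoff A C) f v := by
  have hA := sum_sub_card_mul_le_sum_truncate (Q := (CompatA XA · b₀)) (x := coordA f)
    (cutoff A C)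
  have hC := sum_sub_card_mul_le_sum_truncate (Q := (CompatC XC · b₀)) (x := coordC f)
    (cutoff A C)
  have hsum := JoinVertex.sum_eq f
  rw [JoinVertex.sum_eq]
  simp only [truncateAC]
  simp only [coordA, coordC] at hA hC ⊢
  nlinarith [card_add_one_mul_cutoff_lt_one (A := A) (C := C), cutoff_pos (A := A) (C := C)]

lemma sum_split_truncateAC_pos (hf1 : ∑ v, f v = 1) (s : ℝ) :
    0 < ∑ v, split b₀ s (truncateAC XA XC b₀ (cutoff A C) f) v :=
  by rw [sum_split]; exact sum_truncateAC_pos hf1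

lemma continuousOn_shrink (S : Set (JoinVertex A B C → ℝ)) (hS : ∀ f ∈ S, ∑ v, f v = 1) :
    ContinuousOn (shrink XA XC b₀) S :=
  continuous_truncateAC.continuousOn.normalize fun f hf => (sum_truncateAC_pos (hS f hf)).ne'

lemma continuousOn_unmerge (S : Set (JoinVertex A B C → ℝ)) (hS : ∀ f ∈ S, ∑ v, f v = 1) :
    ContinuousOn (unmerge XA XC b₀) S :=
  (continuous_split.comp (continuous_ratio.prodMk continuous_truncateAC)).continuousOn.normalize
    fun f hf => (sum_split_truncateAC_pos (hS f hf) _).ne'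

lemma finSupport_shrink_subset {X : SComplex (JoinVertex A B C)} (hf : f ∈ X.realization) :
    finSupport (shrink XA XC b₀ f) ⊆ finSupport f := by
  obtain ⟨hf0, hf1, -⟩ := mem_realization_iff.mp hf
  rw [shrink, finSupport_normalize (sum_truncateAC_pos hf1).ne']
  exact finSupport_truncateAC_subset hf0 cutoff_pos.le

lemma shrink_mem {X : SComplex (JoinVertex A B C)} (hf : f ∈ X.realization) :
    shrink XA XC b₀ f ∈ X.realization := by
  obtain ⟨hf0, hf1, hF⟩ := mem_realization_iff.mp hf
  exact normalize_mem_realization (truncateAC_nonneg hf0) (sum_truncateAC_pos hf1)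
    (X.down_closed hF (finSupport_truncateAC_subset hf0 cutoff_pos.le))

lemma partA_finSupport_shrink (hf1 : ∑ v, f v = 1) :
    partA (finSupport (shrink XA XC b₀ f)) =
      finSupport (truncate (CompatA XA · b₀) (cutoff A C) (coordA f)) := by
  rw [shrink, finSupport_normalize (sum_truncateAC_pos hf1).ne', partA_finSupport]
  rfl

lemma partC_finSupport_shrink (hf1 : ∑ v, f v = 1) :
    partC (finSupport (shrink XA XC b₀ f)) =
      finSupport (truncate (CompatC XC · b₀) (cutoff A C) (coordC f)) := by
  rw [shrink, finSupport_normalize (sum_truncateAC_pos hf1).ne', partC_finSupport]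
  rfl

lemma partA_finSupport_unmerge (hf1 : ∑ v, f v = 1) :
    partA (finSupport (unmerge XA XC b₀ f)) =
      finSupport (truncate (CompatA XA · b₀) (cutoff A C) (coordA f)) := by
  rw [unmerge, finSupport_normalize (sum_split_truncateAC_pos hf1 _).ne', partA_finSupport]
  rfl

lemma partC_finSupport_unmerge (hf1 : ∑ v, f v = 1) :
    partC (finSupport (unmerge XA XC b₀ f)) =
      finSupport (truncate (CompatC XC · b₀) (cutoff A C) (coordC f)) := by
  rw [unmerge, finSupport_normalize (sum_split_truncateAC_pos hf1 _).ne', partC_finSupport]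
  rfl

variable {M : Finset B}

lemma merge_mem (hf : f ∈ (partialGlue XA XC M).realization) :
    merge b₀ f ∈ (partialGlue XA XC (insert b₀ M)).realization := by
  obtain ⟨hf0, hf1, hF⟩ := mem_realization_iff.mp hf
  obtain ⟨hA, hC, h₁, h₂⟩ := finSupport_mem_partialGlue_iff.mp hF
  refine mem_realization_iff.mpr ⟨merge_nonneg hf0, (sum_merge f).trans hf1,
    finSupport_mem_partialGlue_iff.mpr ⟨hA, hC, fun b hb => ?_, fun b hb => ?_⟩⟩
  · by_cases hb₀ : b = b₀
    · subst hb₀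
      simp only [merge, ↓reduceIte] at hb
      by_cases hb₁ : f (.inl (.inr b)) = 0
      · rw [hb₁, zero_add] at hb
        exact .inr ⟨Finset.mem_insert_self _ _, (h₂ b hb).2⟩
      · exact (h₁ b hb₁).imp_right fun h => ⟨Finset.mem_insert_of_mem h.1, h.2⟩
    · simp only [merge, hb₀, ↓reduceIte] at hb
      exact (h₁ b hb).imp_right fun h => ⟨Finset.mem_insert_of_mem h.1, h.2⟩
  · by_cases hb₀ : b = b₀
    · simp [merge, hb₀] at hb
    · simp only [merge, hb₀, ↓reduceIte] at hb
      obtain ⟨hM, h⟩ := h₂ b hb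
      exact ⟨by simp [hb₀, hM], h⟩

lemma unmerge_mem (hb₀ : b₀ ∉ M)
    (hf : f ∈ (partialGlue XA XC (insert b₀ M)).realization) :
    unmerge XA XC b₀ f ∈ (partialGlue XA XC M).realization := by
  obtain ⟨hf0, hf1, hF⟩ := mem_realization_iff.mp hf
  obtain ⟨hA, hC, h₁, h₂⟩ := finSupport_mem_partialGlue_iff.mp hF
  have hx : ∀ a, 0 ≤ coordA f a := fun a => hf0 _
  have hy : ∀ c, 0 ≤ coordC f c := fun c => hf0 _
  have hε := cutoff_pos (A := A) (C := C)
  have hxt := finSupport_truncate_subset (Q := (CompatA XA · b₀)) hx hε.le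
  have hyt := finSupport_truncate_subset (Q := (CompatC XC · b₀)) hy hε.le
  have hf₂ := apply_inr_inl_eq_zero hf (Finset.mem_insert_self b₀ M)
  have hcompat (h : f (.inl (.inr b₀)) ≠ 0) :
      CompatA XA (finSupport (coordA f)) b₀ ∨ CompatC XC (finSupport (coordC f)) b₀ :=
    (h₁ b₀ h).imp_right And.right
  refine normalize_mem_realization (split_nonneg (splitRatio_nonneg hε (obstruction_nonneg hy))
      (splitRatio_le_one hε (obstruction_nonneg hx)) (truncateAC_nonneg hf0))
    (sum_split_truncateAC_pos hf1 _)
    (finSupport_mem_partialGlue_iff.mpr ⟨liftA_mem_of_subset hxt hA, liftC_mem_of_subset hyt hC,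
      fun b hb => ?_, fun b hb => ?_⟩)
  · by_cases hb₀' : b = b₀
    · subst hb₀'
      simp only [split, truncateAC, ↓reduceIte, ne_eq, mul_eq_zero, not_or] at hb
      exact .inl (truncate_spec_of_splitRatio_ne_zero (antitone_compatA b) (antitone_compatC b)
        hx hy hε cutoff_lt_one (hcompat hb.2) hb.1)
    · simp only [split, truncateAC, hb₀', ↓reduceIte] at hb
      exact (h₁ b hb).imp (antitone_compatA b hxt) fun h =>
        ⟨(Finset.mem_insert.mp h.1).resolve_left hb₀', antitone_compatC b hyt h.2⟩
  · by_cases hb₀' : b = b₀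
    · subst hb₀'
      simp only [split, truncateAC, ↓reduceIte, hf₂, add_zero, ne_eq, mul_eq_zero, not_or] at hb
      refine ⟨hb₀, truncate_spec_of_splitRatio_ne_zero (antitone_compatC b) (antitone_compatA b)
        hy hx hε cutoff_lt_one (hcompat hb.2).symm ?_⟩
      rw [← one_sub_splitRatio hε.ne']
      exact hb.1
    · simp only [split, truncateAC, hb₀', ↓reduceIte] at hb
      obtain ⟨hM, h⟩ := h₂ b hb
      exact ⟨fun h' => hM (Finset.mem_insert_of_mem h'), antitone_compatC b hyt h⟩

lemma finSupport_merge_unmerge_subset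
    (hf : f ∈ (partialGlue XA XC (insert b₀ M)).realization) :
    finSupport (merge b₀ (unmerge XA XC b₀ f)) ⊆ finSupport f := by
  obtain ⟨hf0, hf1, -⟩ := mem_realization_iff.mp hf
  rw [unmerge, SComplex.normalize, merge_smul,
    finSupport_smul (inv_ne_zero (sum_split_truncateAC_pos hf1 _).ne'), merge_split]
  conv_rhs => rw [← merge_eq_self (apply_inr_inl_eq_zero hf (Finset.mem_insert_self b₀ M))]
  exact finSupport_merge_subset hf0 (finSupport_truncateAC_subset hf0 cutoff_pos.le)

end Step

section HomotopyEquiv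

variable {A B C : Type u} [Fintype A] [Fintype B] [Fintype C]
  (XA : SComplex (A ⊕ B)) (XC : SComplex (B ⊕ C)) (b₀ : B) (M : Finset B)

lemma union_finSupport_shrink_unmerge_mem (hb₀ : b₀ ∉ M) {f : JoinVertex A B C → ℝ}
    (hf : f ∈ (partialGlue XA XC M).realization) :
    finSupport (shrink XA XC b₀ f) ∪ finSupport (unmerge XA XC b₀ (merge b₀ f)) ∈
      (partialGlue XA XC M).faces := by
  have hf1 := sum_eq_one_of_mem_realization hf
  have hmf1 := sum_eq_one_of_mem_realization (merge_mem (b₀ := b₀) hf)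
  refine union_mem_partialGlue
    (mem_realization_iff.mp (shrink_mem (XA := XA) (XC := XC) (b₀ := b₀) hf)).2.2
    (mem_realization_iff.mp (unmerge_mem hb₀ (merge_mem (b₀ := b₀) hf))).2.2 ?_ ?_
  · rw [partA_finSupport_shrink hf1, partA_finSupport_unmerge hmf1]
    rfl
  · rw [partC_finSupport_shrink hf1, partC_finSupport_unmerge hmf1]
    rfl

def mergeMap :
    C((partialGlue XA XC M).realization, (partialGlue XA XC (insert b₀ M)).realization) :=
  realizationMap (merge b₀) continuous_merge.continuousOn fun _ => merge_mem

def unmergeMap (hb₀ : b₀ ∉ M) :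
    C((partialGlue XA XC (insert b₀ M)).realization, (partialGlue XA XC M).realization) :=
  realizationMap (unmerge XA XC b₀)
    (continuousOn_unmerge _ fun _ => sum_eq_one_of_mem_realization) fun _ => unmerge_mem hb₀

def shrinkMap : C((partialGlue XA XC M).realization, (partialGlue XA XC M).realization) :=
  realizationMap (shrink XA XC b₀)
    (continuousOn_shrink _ fun _ => sum_eq_one_of_mem_realization) fun _ => shrink_mem

@[simp] lemma mergeMap_apply (f : (partialGlue XA XC M).realization) :
    (mergeMap XA XC b₀ M f : JoinVertex A B C → ℝ) = merge b₀ f :=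
  rfl

@[simp] lemma unmergeMap_apply (hb₀ : b₀ ∉ M)
    (f : (partialGlue XA XC (insert b₀ M)).realization) :
    (unmergeMap XA XC b₀ M hb₀ f : JoinVertex A B C → ℝ) = unmerge XA XC b₀ f :=
  rfl

@[simp] lemma shrinkMap_apply (f : (partialGlue XA XC M).realization) :
    (shrinkMap XA XC b₀ M f : JoinVertex A B C → ℝ) = shrink XA XC b₀ f :=
  rfl

lemma hEquiv_partialGlue_insert (hb₀ : b₀ ∉ M) :
    HEquiv (partialGlue XA XC M) (partialGlue XA XC (insert b₀ M)) := by
  refine ⟨⟨mergeMap XA XC b₀ M, unmergeMap XA XC b₀ M hb₀, ?_, ?_⟩⟩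
  · have hshrink : (ContinuousMap.id _).Homotopic (shrinkMap XA XC b₀ M) :=
      homotopic_of_finSupport_subset _ _ fun t => by
        rw [shrinkMap_apply]
        exact finSupport_shrink_subset t.2
    have hunmerge : (shrinkMap XA XC b₀ M).Homotopic
        ((unmergeMap XA XC b₀ M hb₀).comp (mergeMap XA XC b₀ M)) := by
      refine ⟨lineHomotopy _ _ fun t => ?_⟩
      rw [ContinuousMap.comp_apply, shrinkMap_apply, unmergeMap_apply, mergeMap_apply]
      exact union_finSupport_shrink_unmerge_mem XA XC b₀ M hb₀ t.2
    exact (hshrink.trans hunmerge).symm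
  · refine (homotopic_of_finSupport_subset _ _ fun t => ?_).symm
    rw [ContinuousMap.comp_apply, mergeMap_apply, unmergeMap_apply]
    exact finSupport_merge_unmerge_subset t.2

lemma hEquiv_partialGlue_empty : HEquiv (partialGlue XA XC ∅) (partialGlue XA XC M) := by
  induction M using Finset.induction_on with
  | empty => exact ⟨ContinuousMap.HomotopyEquiv.refl _⟩
  | insert b₀ M hb₀ ih => exact ih.trans (hEquiv_partialGlue_insert XA XC b₀ M hb₀)

end HomotopyEquiv

section Ends

variable {A B C : Type u} (XA : SComplex (A ⊕ B)) (XC : SComplex (B ⊕ C))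

lemma join_eq_partialGlue_empty
    (hAB : ∀ N : Finset (A ⊕ B), N ∉ XA.faces →
      (∀ N' : Finset (A ⊕ B), N' ⊂ N → N' ∈ XA.faces) →
      (N.preimage Sum.inr Sum.inr_injective.injOn).card ≤ 1)
    (hBC : ∀ N : Finset (B ⊕ C), N ∉ XC.faces →
      (∀ N' : Finset (B ⊕ C), N' ⊂ N → N' ∈ XC.faces) →
      (N.preimage Sum.inl Sum.inl_injective.injOn).card ≤ 1) :
    SComplex.join XA XC = partialGlue XA XC ∅ := by
  refine SComplex.ext (Set.ext fun F => ?_)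
  have hA : (F.preimage Sum.inl Sum.inl_injective.injOn).filter
      (· ∉ Set.range (Function.Embedding.inr : B ↪ A ⊕ B)) = liftA (partA F) := by
    ext ((a | b)) <;> simp [liftA]
  have hC : (F.preimage Sum.inr Sum.inr_injective.injOn).filter
      (· ∉ Set.range (Function.Embedding.inl : B ↪ B ⊕ C)) = liftC (partC F) := by
    ext ((b | c)) <;> simp [liftC]
  have h := (SComplex.mem_faces_iff_of_minimal_nonfaces XA .inr hAB
    (F.preimage Sum.inl Sum.inl_injective.injOn)).and
    (SComplex.mem_faces_iff_of_minimal_nonfaces XC .inl hBC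
      (F.preimage Sum.inr Sum.inr_injective.injOn))
  simp only [hA, hC, Finset.mem_preimage, Function.Embedding.inr_apply,
    Function.Embedding.inl_apply] at h
  simp only [SComplex.join, partialGlue, Set.mem_ofPred_eq, h, Finset.notMem_empty, false_and,
    or_false, not_false_eq_true, true_and, CompatA, CompatC, mem_partB₁, mem_partB₂]
  exact ⟨fun ⟨⟨hA, h₁⟩, hC, h₂⟩ => ⟨hA, hC, h₁, h₂⟩,
    fun ⟨hA, hC, h₁, h₂⟩ => ⟨⟨hA, h₁⟩, hC, h₂⟩⟩

def glueEmbedding : A ⊕ B ⊕ C ↪ JoinVertex A B C where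
  toFun := Sum.elim (fun a => .inl (.inl a))
    (Sum.elim (fun b => .inl (.inr b)) fun c => .inr (.inr c))
  inj' := by rintro (a | b | c) (a' | b' | c') h <;> simp_all

@[simp] lemma glueEmbedding_inl (a : A) :
    glueEmbedding (.inl a : A ⊕ B ⊕ C) = .inl (.inl a) := rfl
@[simp] lemma glueEmbedding_inr_inl (b : B) :
    glueEmbedding (.inr (.inl b) : A ⊕ B ⊕ C) = .inl (.inr b) := rfl
@[simp] lemma glueEmbedding_inr_inr (c : C) :
    glueEmbedding (.inr (.inr c) : A ⊕ B ⊕ C) = .inr (.inr c) := rfl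

lemma mem_range_glueEmbedding_of_mem_partialGlue_univ [Fintype B] :
    ∀ F ∈ (partialGlue XA XC univ).faces, ∀ v ∈ F,
      v ∈ Set.range (glueEmbedding (A := A) (C := C)) := by
  rintro F ⟨-, -, -, h₂⟩ ((a | b) | (b | c)) hv
  · exact ⟨.inl a, rfl⟩
  · exact ⟨.inr (.inl b), rfl⟩
  · exact absurd (mem_univ b) (h₂ b (mem_partB₂.mpr hv)).1
  · exact ⟨.inr (.inr c), rfl⟩

lemma mem_glueComplex_faces_iff [Fintype B] (G : Finset (A ⊕ B ⊕ C)) :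
    G ∈ (glueComplex XA XC).faces ↔ G.map glueEmbedding ∈ (partialGlue XA XC univ).faces := by
  have hA : partA (G.map glueEmbedding) = aPart G := by ext; simp [aPart]
  have h₁ : partB₁ (G.map glueEmbedding) = bPart G := by ext; simp [bPart]
  have h₂ : partB₂ (G.map glueEmbedding) = ∅ := by ext; simp
  have hC : partC (G.map glueEmbedding) = cPart G := by ext; simp [cPart]
  simp only [glueComplex, partialGlue, Set.mem_ofPred_eq, hA, h₁, h₂, hC, Finset.notMem_empty,
    IsEmpty.forall_iff, implies_true, and_true, mem_univ, true_and, CompatA, CompatC, liftA,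
    liftC]

variable [Fintype A] [Fintype B] [Fintype C]

def partialGlueUnivHomeomorph :
    (partialGlue XA XC univ).realization ≃ₜ (glueComplex XA XC).realization :=
  (realizationHomeomorphOfEmbedding _ _ glueEmbedding
    (mem_range_glueEmbedding_of_mem_partialGlue_univ XA XC)
    (mem_glueComplex_faces_iff XA XC)).symm

end Ends

/-- Let `X_{AB}` and `X_{BC}` be simplicial complexes on
`A ∪ B` and `B ∪ C` such that no minimal nonface (= minimal generator of the
Stanley–Reisner ideal) contains two vertices of `B`.  Then the join
`X_{AB'} * X_{B''C}` (on two disjoint copies of `B`) is homotopy equivalent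
to the glued complex `X` described above. -/
theorem statement_4 {A B C : Type u} [Fintype A] [Fintype B] [Fintype C]
    (XA : SComplex (A ⊕ B)) (XC : SComplex (B ⊕ C))
    (hAB : ∀ N : Finset (A ⊕ B), N ∉ XA.faces →
      (∀ N' : Finset (A ⊕ B), N' ⊂ N → N' ∈ XA.faces) →
      (N.preimage Sum.inr Sum.inr_injective.injOn).card ≤ 1)
    (hBC : ∀ N : Finset (B ⊕ C), N ∉ XC.faces →
      (∀ N' : Finset (B ⊕ C), N' ⊂ N → N' ∈ XC.faces) →
      (N.preimage Sum.inl Sum.inl_injective.injOn).card ≤ 1) :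
    SComplex.HEquiv (SComplex.join XA XC) (glueComplex XA XC) := by
  rw [join_eq_partialGlue_empty XA XC hAB hBC]
  exact (hEquiv_partialGlue_empty XA XC univ).trans
    ⟨(partialGlueUnivHomeomorph XA XC).toHomotopyEquiv⟩

end
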